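/- arXiv:1109.0265 — 2 statements merged into one kernel-verified Lean document; each statement's English description precedes it below -/
import Mathlib

section
/- For the standard simplex categories, cat(N([k]) × N([l])) ≅ [k] × [l], naturally in [k] and [l], where [n] denotes the linear order category 0 → 1 → ⋯ → n. -/
/-!
The nerve is a fully faithful right adjoint. Being a right adjoint it preserves products, so
`N[k] × N[l] ≅ N([k] × [l])`; being fully faithful, the counit `cat (N C) ⟶ C` is invertible.
-/

open CategoryTheory CategoryTheory.Limits

namespace CategoryTheory.Adjunction

variable {C D : Type*} [Category C] [Category D] [HasBinaryProducts C] [HasBinaryProducts D]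
  {L : D ⥤ C} {R : C ⥤ D} (adj : L ⊣ R) [R.Full] [R.Faithful]

noncomputable def leftAdjointObjProdIso (X Y : C) : L.obj (R.obj X ⨯ R.obj Y) ≅ X ⨯ Y :=
  have := adj.rightAdjoint_preservesLimits
  L.mapIso (asIso (prodComparison R X Y)).symm ≪≫ asIso (adj.counit.app (X ⨯ Y))

theorem leftAdjointObjProdIso_hom_naturality {X X' Y Y' : C} (f : X ⟶ X') (g : Y ⟶ Y') :
    L.map (prod.map (R.map f) (R.map g)) ≫ (adj.leftAdjointObjProdIso X' Y').hom =
      (adj.leftAdjointObjProdIso X Y).hom ≫ prod.map f g := by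
  have := adj.rightAdjoint_preservesLimits
  have hcomparison : prod.map (R.map f) (R.map g) ≫ inv (prodComparison R X' Y') =
      inv (prodComparison R X Y) ≫ R.map (prod.map f g) :=
    (prodComparison_inv_natural R f g).symm
  simp only [leftAdjointObjProdIso, Iso.trans_hom, Functor.mapIso_hom, Iso.symm_hom, asIso_hom,
    asIso_inv]
  rw [← Category.assoc, ← L.map_comp, hcomparison, L.map_comp, Category.assoc, Category.assoc,
    adj.counit_naturality]

end CategoryTheory.Adjunction

/-- For the standard simplices, `cat (N[k] × N[l]) ≅ [k] × [l]`, naturally in `[k]` and `[l]`,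
where `cat` is any left adjoint of the nerve functor, `[n]` denotes the linear order category
`0 → 1 → ⋯ → n` (i.e. `SimplexCategory.toCat.obj [n]`), and `N[k] = Δ[k]` is the nerve of
`[k]`, the standard `k`-simplex. -/
theorem categorification_of_product_of_standard_simplices
    (catF : SSet.{0} ⥤ Cat.{0, 0}) (adj : catF ⊣ nerveFunctor.{0, 0}) :
    ∃ e : ∀ k l : SimplexCategory,
        catF.obj
            (nerveFunctor.obj (SimplexCategory.toCat.obj k) ⨯
              nerveFunctor.obj (SimplexCategory.toCat.obj l)) ≅
          (SimplexCategory.toCat.obj k) ⨯ (SimplexCategory.toCat.obj l),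
      ∀ (k k' l l' : SimplexCategory) (f : k ⟶ k') (g : l ⟶ l'),
        catF.map
            (Limits.prod.map (nerveFunctor.map (SimplexCategory.toCat.map f))
              (nerveFunctor.map (SimplexCategory.toCat.map g))) ≫ (e k' l').hom =
          (e k l).hom ≫
            Limits.prod.map (SimplexCategory.toCat.map f) (SimplexCategory.toCat.map g) :=
  ⟨fun _ _ => adj.leftAdjointObjProdIso _ _,
    fun _ _ _ _ f g => adj.leftAdjointObjProdIso_hom_naturality
      (SimplexCategory.toCat.map f) (SimplexCategory.toCat.map g)⟩
end

section
/- Let C be a category with a class W of weak equivalences containing all isomorphisms and satisfying 2-out-of-3, such that the localization γ : A → A[W_A⁻¹] exists. Let N : B ⇄ A : F be functors, define W_B = N⁻¹(W_A), and let B̃ ⊆ A[W_A⁻¹] be the full subcategory on objects N(B), B ∈ B, so γ∘N factors as j∘δ with j : B̃ → A[W_A⁻¹] the inclusion. If there are zig-zags of natural weak equivalences Id ⇝ N∘F and Id ⇝ F∘N, then j is an equivalence of categories and δ : B → B̃ is a localization of B at W_B up to equivalence: every functor H : B → D inverting W_B factors through δ up to natural isomorphism, uniquely up to natural isomorphism.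 -/
/-!
Any functor inverting `W` turns a zig-zag of weak equivalences into a natural isomorphism, so
`γ ≅ γ ∘ N ∘ F`. Hence every object of `A[W⁻¹]` is isomorphic to some `γ N b`, which makes the
fully faithful inclusion `j` an equivalence, and `F ⋙ δ ≅ j⁻¹ ∘ γ` is itself a localization of
`A` at `W`. By 2-out-of-3, `N` carries `F(W)` into `W`, so for `H` inverting `W_B` the functor
`H ∘ F` inverts `W` and lifts along `γ`; as `H ≅ H ∘ F ∘ N`, precomposing this lift with `j`
factors `H` through `δ`. Two factorizations agree after precomposition with `F ⋙ δ`, hence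
agree by the universal property of that localization.
-/

open CategoryTheory

universe w u v u' v' u'' v''

/-- A zig-zag of natural weak equivalences between two functors `F, G : X ⥤ Y`:
a finite chain of functors connected by natural transformations (in either direction),
each of whose components lies in `W`. -/
def ZigzagWE {X : Type u} [Category.{v} X] {Y : Type u'} [Category.{v'} Y]
    (W : MorphismProperty Y) (F G : X ⥤ Y) : Prop :=
  Relation.ReflTransGen
    (fun F' G' : X ⥤ Y =>
      (∃ α : F' ⟶ G', ∀ x, W (α.app x)) ∨ (∃ α : G' ⟶ F', ∀ x, W (α.app x)))
    F G

variable {A : Type u} [Category.{v} A] {B : Type u'} [Category.{v'} B]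
  {A' : Type u''} [Category.{v''} A']

/-- The full subcategory `B̃` of the localization `A[W⁻¹]` on the objects coming from `B`. -/
abbrev ImageSubcat (γ : A ⥤ A') (N : B ⥤ A) : Type u'' :=
  ObjectProperty.FullSubcategory fun a : A' => ∃ b : B, (N ⋙ γ).obj b = a

/-- The factorization `δ : B → B̃` of `γ ∘ N` through the full subcategory `B̃`. -/
def deltaFunctor (γ : A ⥤ A') (N : B ⥤ A) : B ⥤ ImageSubcat γ N :=
  ObjectProperty.lift _ (N ⋙ γ) fun b => ⟨b, rfl⟩

section Zigzag

variable {X Y E : Type*} [Category X] [Category Y] [Category E]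
  {W : MorphismProperty Y} {G G' : X ⥤ Y}

lemma CategoryTheory.MorphismProperty.IsInvertedBy.isIso_whiskerRight {K : Y ⥤ E}
    (hK : W.IsInvertedBy K) (α : G ⟶ G') (hα : ∀ x, W (α.app x)) :
    IsIso (Functor.whiskerRight α K) :=
  have : ∀ x, IsIso ((Functor.whiskerRight α K).app x) := fun x => hK _ (hα x)
  NatIso.isIso_of_isIso_app _

namespace ZigzagWE

lemma nonempty_isoWhiskerRight (h : ZigzagWE W G G') {K : Y ⥤ E} (hK : W.IsInvertedBy K) :
    Nonempty (G ⋙ K ≅ G' ⋙ K) := by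
  induction h with
  | refl => exact ⟨Iso.refl _⟩
  | tail _ hstep ih =>
    obtain ⟨e⟩ := ih
    rcases hstep with ⟨α, hα⟩ | ⟨α, hα⟩
    · have := hK.isIso_whiskerRight α hα
      exact ⟨e ≪≫ asIso (Functor.whiskerRight α K)⟩
    · have := hK.isIso_whiskerRight α hα
      exact ⟨e ≪≫ (asIso (Functor.whiskerRight α K)).symm⟩

lemma map_mem [W.HasTwoOutOfThreeProperty] (h : ZigzagWE W G G') {a b : X} (f : a ⟶ b)
    (hf : W (G.map f)) : W (G'.map f) := by
  induction h with
  | refl => exact hf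
  | @tail G₁ G₂ _ hstep ih =>
    rcases hstep with ⟨α, hα⟩ | ⟨α, hα⟩
    · have hcomp : W (α.app a ≫ G₂.map f) := by
        rw [← α.naturality f]
        exact W.comp_mem _ _ ih (hα b)
      exact W.of_precomp _ _ (hα a) hcomp
    · have hcomp : W (G₂.map f ≫ α.app b) := by
        rw [α.naturality f]
        exact W.comp_mem _ _ (hα a) ih
      exact W.of_postcomp _ _ (hα b) hcomp

end ZigzagWE

end Zigzag

lemma isInvertedBy_comp_of_zigzagWE {D : Type*} [Category D] {W : MorphismProperty A}
    [W.HasTwoOutOfThreeProperty] {N : B ⥤ A} {F : A ⥤ B} (hNF : ZigzagWE W (𝟭 A) (F ⋙ N))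
    {H : B ⥤ D} (hH : (W.inverseImage N).IsInvertedBy H) : W.IsInvertedBy (F ⋙ H) :=
  fun _ _ f hf => hH (F.map f) (hNF.map_mem f hf)

section

variable {γ : A ⥤ A'} {N : B ⥤ A} {F : A ⥤ B}

lemma isEquivalence_ι_imageSubcat [γ.EssSurj] (e : γ ≅ (F ⋙ N) ⋙ γ) :
    (ObjectProperty.ι _ : ImageSubcat γ N ⥤ A').IsEquivalence :=
  have : (ObjectProperty.ι _ : ImageSubcat γ N ⥤ A').EssSurj :=
    ⟨fun a' => ⟨⟨_, F.obj (γ.objPreimage a'), rfl⟩,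
      ⟨(e.app (γ.objPreimage a')).symm ≪≫ γ.objObjPreimageIso a'⟩⟩⟩
  { }

lemma isLocalization_comp_deltaFunctor (W : MorphismProperty A) [γ.IsLocalization W]
    (e : γ ≅ (F ⋙ N) ⋙ γ) [(ObjectProperty.ι _ : ImageSubcat γ N ⥤ A').IsEquivalence] :
    (F ⋙ deltaFunctor γ N).IsLocalization W := by
  let ι : ImageSubcat γ N ⥤ A' := ObjectProperty.ι _
  have : ((F ⋙ deltaFunctor γ N) ⋙ ι).IsLocalization W := Functor.IsLocalization.of_iso W e
  exact Functor.IsLocalization.of_equivalence_target ((F ⋙ deltaFunctor γ N) ⋙ ι) W _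
    ι.asEquivalence.symm
    (Functor.associator _ _ _ ≪≫
      Functor.isoWhiskerLeft _ ι.asEquivalence.unitIso.symm ≪≫ Functor.rightUnitor _)

end

theorem localization_up_to_equivalence_general
    (W : MorphismProperty A)
    [W.HasTwoOutOfThreeProperty]
    (γ : A ⥤ A') [γ.IsLocalization W]
    (N : B ⥤ A) (F : A ⥤ B)
    (hNF : ZigzagWE W (𝟭 A) (F ⋙ N))
    (hFN : ZigzagWE (W.inverseImage N) (𝟭 B) (N ⋙ F)) :
    (ObjectProperty.ι _ : ImageSubcat γ N ⥤ A').IsEquivalence ∧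
      ∀ (D : Type w) [Category.{w} D] (H : B ⥤ D),
        (∀ ⦃X Y : B⦄ (f : X ⟶ Y), W.inverseImage N f → IsIso (H.map f)) →
          (∃ H' : ImageSubcat γ N ⥤ D, Nonempty (deltaFunctor γ N ⋙ H' ≅ H)) ∧
            ∀ H₁ H₂ : ImageSubcat γ N ⥤ D,
              Nonempty (deltaFunctor γ N ⋙ H₁ ≅ H) → Nonempty (deltaFunctor γ N ⋙ H₂ ≅ H) →
                Nonempty (H₁ ≅ H₂) := by
  obtain ⟨eA⟩ : Nonempty (γ ≅ (F ⋙ N) ⋙ γ) :=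
    hNF.nonempty_isoWhiskerRight (Localization.inverts γ W)
  have := Localization.essSurj γ W
  have hι := isEquivalence_ι_imageSubcat (N := N) eA
  have := isLocalization_comp_deltaFunctor W eA
  refine ⟨hι, fun D _ H hH => ⟨?_, fun H₁ H₂ ⟨e₁⟩ ⟨e₂⟩ => ?_⟩⟩
  · have hFH := isInvertedBy_comp_of_zigzagWE hNF hH
    obtain ⟨eB⟩ := hFN.nonempty_isoWhiskerRight hH
    exact ⟨ObjectProperty.ι _ ⋙ Localization.lift (F ⋙ H) hFH γ,
      ⟨Functor.isoWhiskerLeft N (Localization.fac (F ⋙ H) hFH γ) ≪≫ eB.symm⟩⟩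
  · let L := F ⋙ deltaFunctor γ N
    exact ⟨Localization.liftNatIso L W (L ⋙ H₁) (L ⋙ H₂) H₁ H₂
      (Functor.isoWhiskerLeft F (e₁ ≪≫ e₂.symm))⟩

/-- Proposition C.4: Let `W` be a class of weak equivalences on `A` containing all
isomorphisms and satisfying 2-out-of-3, with localization `γ : A → A[W⁻¹]`.  Given
functors `N : B → A` and `F : A → B`, let `W_B = N⁻¹(W)`, let `B̃ ⊆ A[W⁻¹]` be the full
subcategory on the objects `N(b)` and `δ : B → B̃` the factorization of `γ ∘ N`.  If there
are zig-zags of natural weak equivalences `Id ⇝ N∘F` and `Id ⇝ F∘N`, then the inclusion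
`j : B̃ → A[W⁻¹]` is an equivalence of categories and `δ` is a localization of `B` at
`W_B` up to equivalence:  every functor `H : B → D` inverting `W_B` factors through `δ`
up to natural isomorphism, uniquely up to natural isomorphism. -/
theorem localization_up_to_equivalence
    (W : MorphismProperty A)
    (hiso : ∀ ⦃X Y : A⦄ (f : X ⟶ Y), IsIso f → W f)
    [W.HasTwoOutOfThreeProperty]
    (γ : A ⥤ A') [γ.IsLocalization W]
    (N : B ⥤ A) (F : A ⥤ B)
    (hNF : ZigzagWE W (𝟭 A) (F ⋙ N))
    (hFN : ZigzagWE (W.inverseImage N) (𝟭 B) (N ⋙ F)) :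
    (ObjectProperty.ι _ : ImageSubcat γ N ⥤ A').IsEquivalence ∧
      ∀ (D : Type w) [Category.{w} D] (H : B ⥤ D),
        (∀ ⦃X Y : B⦄ (f : X ⟶ Y), W.inverseImage N f → IsIso (H.map f)) →
          (∃ H' : ImageSubcat γ N ⥤ D, Nonempty (deltaFunctor γ N ⋙ H' ≅ H)) ∧
            ∀ H₁ H₂ : ImageSubcat γ N ⥤ D,
              Nonempty (deltaFunctor γ N ⋙ H₁ ≅ H) → Nonempty (deltaFunctor γ N ⋙ H₂ ≅ H) →
                Nonempty (H₁ ≅ H₂) :=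
  localization_up_to_equivalence_general W γ N F hNF hFN
end
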